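/- If P and Q are nonzero polynomials in ℝ[x₁, x₂] with no common (nonconstant) factor, then Z(P) ∩ Z(Q) ⊂ ℝ² contains at most (deg P)·(deg Q) points. -/

import Mathlib

/-!
Let `m = deg P`, `n = deg Q`, let `S` be a finite set of common zeros, and let `V k` be the space
of polynomials of degree `≤ k`, of dimension `(k + 2).choose 2`. Take `c = #S`. Evaluation at
the points of `S` maps `V (c + m + n)` onto `K ^ S` (Lagrange interpolation) and kills every
`A * P + B * Q` with `A ∈ V (c + n)`, `B ∈ V (c + m)`. Since `P` and `Q` are coprime,
`A * P + B * Q = 0` forces `(A, B) = (D * Q, -D * P)` with `D ∈ V c`, so these combinations span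
a space of dimension at least `dim V (c + n) + dim V (c + m) - dim V c`. Hence
`#S ≤ dim V (c + m + n) - dim V (c + n) - dim V (c + m) + dim V c = m * n`.
-/

def zeroSet (Q : MvPolynomial (Fin 2) ℝ) : Set (Fin 2 → ℝ) :=
  {x | MvPolynomial.eval x Q = 0}

open MvPolynomial Finset LinearMap

theorem finrank_restrictTotalDegree (σ R : Type*) [Fintype σ] [CommSemiring R]
    [StrongRankCondition R] (e : ℕ) :
    Module.finrank R (restrictTotalDegree σ R e) =
      (e + Fintype.card σ).choose (Fintype.card σ) := by
  classical
  have hmonomials : {n : σ →₀ ℕ | (n.sum fun _ k => k) ≤ e} =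
      ((Finset.range (e + 1)).biUnion fun k => (univ : Finset σ).finsuppAntidiag k : Finset _) := by
    ext n
    simp [Finsupp.sum_fintype]
  rw [restrictTotalDegree, Module.finrank_eq_nat_card_basis (basisRestrictSupport R _),
    hmonomials, Nat.card_coe_set_eq, Set.ncard_coe_finset, card_biUnion]
  · simp only [card_finsuppAntidiag_nat_eq_choose, card_univ]
    cases Fintype.card σ with
    | zero => simp [sum_range_succ']
    | succ s =>
      rw [← add_assoc, ← Nat.sum_range_add_choose]
      refine sum_congr rfl fun k _ => ?_
      rw [show s + 1 + k - 1 = k + s by omega, Nat.choose_symm_add]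
  · intro k _ l _ hkl
    exact disjoint_left.2 fun n hk hl =>
      hkl ((mem_finsuppAntidiag.1 hk).1.symm.trans (mem_finsuppAntidiag.1 hl).1)

theorem Nat.choose_two_mixed_difference (c m n : ℕ) :
    (c + m + n + 2).choose 2 + (c + 2).choose 2 =
      m * n + (c + n + 2).choose 2 + (c + m + 2).choose 2 := by
  have h (k : ℕ) : (k + 2).choose 2 * 2 = (k + 2) * (k + 1) := by
    rw [← Nat.add_one_mul_choose_eq, Nat.choose_one_right]
  linarith [h (c + m + n), h c, h (c + n), h (c + m)]

theorem LinearMap.finrank_add_finrank_le_of_ker_le_range_of_range_le_ker {K U V W N : Type*}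
    [DivisionRing K] [AddCommGroup U] [Module K U] [AddCommGroup V] [Module K V]
    [AddCommGroup W] [Module K W] [AddCommGroup N] [Module K N]
    [FiniteDimensional K U] [FiniteDimensional K V] [FiniteDimensional K W]
    {ψ : U →ₗ[K] V} {φ : V →ₗ[K] W} {ε : W →ₗ[K] N}
    (hψφ : ker φ ≤ range ψ) (hφε : range φ ≤ ker ε) (hε : Function.Surjective ε) :
    Module.finrank K V + Module.finrank K N ≤ Module.finrank K U + Module.finrank K W := by
  have hφ := φ.finrank_range_add_finrank_ker
  have hε' := ε.finrank_range_add_finrank_ker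
  rw [range_eq_top.2 hε, finrank_top] at hε'
  have := Submodule.finrank_mono hψφ
  have := Submodule.finrank_mono hφε
  have := ψ.finrank_range_le
  omega

section Interpolation

variable {σ K : Type*} [Field K]

theorem exists_totalDegree_le_one_eval_eq_one_eval_eq_zero {s t : σ → K} (h : s ≠ t) :
    ∃ L : MvPolynomial σ K, L.totalDegree ≤ 1 ∧ eval s L = 1 ∧ eval t L = 0 := by
  obtain ⟨i, hi⟩ := Function.ne_iff.mp h
  refine ⟨(s i - t i)⁻¹ • (X i - C (t i)), ?_, ?_, by simp⟩
  · exact (totalDegree_smul_le _ _).trans ((totalDegree_sub_C_le _ _).trans (totalDegree_X _).le)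
  · simp [inv_mul_cancel₀ (sub_ne_zero.2 hi)]

theorem exists_totalDegree_le_card_eval_eq_one_eval_eq_zero {s : σ → K} {T : Finset (σ → K)}
    (hs : s ∉ T) :
    ∃ p : MvPolynomial σ K, p.totalDegree ≤ #T ∧ eval s p = 1 ∧ ∀ t ∈ T, eval t p = 0 := by
  classical
  induction T using Finset.induction_on with
  | empty => exact ⟨1, by simp, by simp, by simp⟩
  | insert t T ht ih =>
    obtain ⟨p, hp, hps, hpT⟩ := ih fun h => hs (mem_insert_of_mem h)
    obtain ⟨L, hL, hLs, hLt⟩ :=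
      exists_totalDegree_le_one_eval_eq_one_eval_eq_zero
        (ne_of_mem_of_not_mem (mem_insert_self t T) hs).symm
    refine ⟨p * L, ?_, by simp [hps, hLs], ?_⟩
    · rw [card_insert_of_notMem ht]
      exact (totalDegree_mul _ _).trans (add_le_add hp hL)
    · simp only [forall_mem_insert, map_mul]
      exact ⟨by simp [hLt], fun u hu => by simp [hpT u hu]⟩

theorem exists_totalDegree_le_eval_eq {S : Finset (σ → K)} {d : ℕ} (hd : #S ≤ d + 1)
    (f : (σ → K) → K) :
    ∃ p : MvPolynomial σ K, p.totalDegree ≤ d ∧ ∀ s ∈ S, eval s p = f s := by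
  classical
  choose ℓ hℓ hℓs hℓS using fun s =>
    exists_totalDegree_le_card_eval_eq_one_eval_eq_zero (S.notMem_erase s)
  refine ⟨∑ s ∈ S, f s • ℓ s, ?_, fun t ht => ?_⟩
  · refine (totalDegree_finsetSum _ _).trans (Finset.sup_le fun s hs => ?_)
    have := card_erase_of_mem hs
    exact (totalDegree_smul_le _ _).trans ((hℓ s).trans (by omega))
  · rw [map_sum, sum_eq_single t]
    · simp [hℓs]
    · intro s _ hst
      simp [hℓS s t (mem_erase.2 ⟨hst.symm, ht⟩)]
    · exact fun h => absurd ht h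

end Interpolation

section KoszulComplex

variable {σ R : Type*} [CommRing R]

noncomputable def mulRightRestrictTotalDegree (p : MvPolynomial σ R) {j k : ℕ}
    (h : j + p.totalDegree ≤ k) : restrictTotalDegree σ R j →ₗ[R] restrictTotalDegree σ R k :=
  (mulRight R p ∘ₗ (restrictTotalDegree σ R j).subtype).codRestrict _ fun A =>
    (mem_restrictTotalDegree _ _ _).2 <| (totalDegree_mul _ _).trans <|
      (Nat.add_le_add_right ((mem_restrictTotalDegree _ _ _).1 A.2) _).trans h

@[simp]
theorem coe_mulRightRestrictTotalDegree_apply (p : MvPolynomial σ R) {j k : ℕ}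
    (h : j + p.totalDegree ≤ k) (A : restrictTotalDegree σ R j) :
    (mulRightRestrictTotalDegree p h A : MvPolynomial σ R) = A * p :=
  rfl

noncomputable def koszulDiff₂ (P Q : MvPolynomial σ R) (c : ℕ) : restrictTotalDegree σ R c →ₗ[R]
    restrictTotalDegree σ R (c + Q.totalDegree) × restrictTotalDegree σ R (c + P.totalDegree) :=
  (mulRightRestrictTotalDegree Q le_rfl).prod
    (mulRightRestrictTotalDegree (-P) (by rw [totalDegree_neg]))

noncomputable def koszulDiff₁ (P Q : MvPolynomial σ R) (c : ℕ) :
    restrictTotalDegree σ R (c + Q.totalDegree) × restrictTotalDegree σ R (c + P.totalDegree) →ₗ[R]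
      restrictTotalDegree σ R (c + P.totalDegree + Q.totalDegree) :=
  (mulRightRestrictTotalDegree P (by omega)).coprod (mulRightRestrictTotalDegree Q (by omega))

noncomputable def restrictTotalDegreeEvalOn (S : Set (σ → R)) (d : ℕ) :
    restrictTotalDegree σ R d →ₗ[R] S → R :=
  funLeft R R ((↑) : S → σ → R) ∘ₗ evalₗ R σ ∘ₗ (restrictTotalDegree σ R d).subtype

theorem ker_koszulDiff₁_le_range_koszulDiff₂ [IsDomain R]
    [DecompositionMonoid (MvPolynomial σ R)] {P Q : MvPolynomial σ R} (hPQ : IsRelPrime P Q)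
    (hQ : Q ≠ 0) (c : ℕ) : ker (koszulDiff₁ P Q c) ≤ range (koszulDiff₂ P Q c) := by
  rintro ⟨A, B⟩ hAB
  have hAB : (A : MvPolynomial σ R) * P + B * Q = 0 := congrArg Subtype.val hAB
  obtain ⟨D, hA⟩ : Q ∣ (A : MvPolynomial σ R) :=
    hPQ.symm.dvd_of_dvd_mul_right ⟨-B, by linear_combination hAB⟩
  have hB : (B : MvPolynomial σ R) = D * -P :=
    mul_left_cancel₀ hQ (by linear_combination hAB - P * hA)
  have hD : D ∈ restrictTotalDegree σ R c := by
    rcases eq_or_ne D 0 with rfl | hD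
    · exact zero_mem _
    have hAdeg := (mem_restrictTotalDegree _ _ _).1 A.2
    rw [hA, totalDegree_mul_of_isDomain hQ hD] at hAdeg
    exact (mem_restrictTotalDegree _ _ _).2 (by omega)
  exact ⟨⟨D, hD⟩, Prod.ext (Subtype.ext (by simp [koszulDiff₂, hA, mul_comm]))
    (Subtype.ext (by simp [koszulDiff₂, hB]))⟩

theorem range_koszulDiff₁_le_ker_restrictTotalDegreeEvalOn {P Q : MvPolynomial σ R}
    {S : Set (σ → R)} (hS : ∀ s ∈ S, eval s P = 0 ∧ eval s Q = 0) (c : ℕ) :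
    range (koszulDiff₁ P Q c) ≤ ker (restrictTotalDegreeEvalOn S _) := by
  rintro _ ⟨⟨A, B⟩, rfl⟩
  ext s
  simp [restrictTotalDegreeEvalOn, koszulDiff₁, funLeft, (hS s s.2).1, (hS s s.2).2]

theorem surjective_restrictTotalDegreeEvalOn {K : Type*} [Field K] {S : Finset (σ → K)} {d : ℕ}
    (hd : #S ≤ d + 1) : Function.Surjective (restrictTotalDegreeEvalOn (S : Set (σ → K)) d) := by
  classical
  intro f
  obtain ⟨p, hp, hpS⟩ :=
    exists_totalDegree_le_eval_eq hd fun x => if h : x ∈ S then f ⟨x, h⟩ else 0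
  exact ⟨⟨p, (mem_restrictTotalDegree _ _ _).2 hp⟩,
    funext fun s => by simp [restrictTotalDegreeEvalOn, funLeft, hpS s s.2]⟩

end KoszulComplex

theorem card_le_totalDegree_mul_totalDegree {K : Type*} [Field K] {P Q : MvPolynomial (Fin 2) K}
    (hPQ : IsRelPrime P Q) (hQ : Q ≠ 0) {S : Finset (Fin 2 → K)}
    (hS : ∀ s ∈ S, eval s P = 0 ∧ eval s Q = 0) :
    #S ≤ P.totalDegree * Q.totalDegree := by
  have key := finrank_add_finrank_le_of_ker_le_range_of_range_le_ker
    (ker_koszulDiff₁_le_range_koszulDiff₂ hPQ hQ #S)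
    (range_koszulDiff₁_le_ker_restrictTotalDegreeEvalOn hS #S)
    (surjective_restrictTotalDegreeEvalOn (by omega))
  simp only [Module.finrank_prod, finrank_restrictTotalDegree, Module.finrank_fintype_fun_eq_card,
    coe_sort_coe, Fintype.card_coe, Fintype.card_fin] at key
  have := Nat.choose_two_mixed_difference #S P.totalDegree Q.totalDegree
  omega

theorem isRelPrime_of_forall_dvd_totalDegree_eq_zero {σ K : Type*} [Field K]
    {P Q : MvPolynomial σ K} (hQ : Q ≠ 0)
    (h : ∀ R : MvPolynomial σ K, R ∣ P → R ∣ Q → R.totalDegree = 0) : IsRelPrime P Q := by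
  intro R hRP hRQ
  have hR := totalDegree_eq_zero_iff_eq_C.1 (h R hRP hRQ)
  refine isUnit_iff_eq_C_of_isReduced.2 ⟨R.coeff 0, Ne.isUnit fun h0 => hQ ?_, hR⟩
  rw [hR, h0, C_0, zero_dvd_iff] at hRQ
  exact hRQ

theorem Set.ncard_le_of_forall_finset_card_le {α : Type*} {s : Set α} {k : ℕ}
    (h : ∀ t : Finset α, ↑t ⊆ s → #t ≤ k) : s.ncard ≤ k := by
  rcases s.finite_or_infinite with hs | hs
  · rw [Set.ncard_eq_toFinset_card _ hs]
    exact h _ hs.coe_toFinset.subset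
  · rw [hs.ncard]
    exact Nat.zero_le _

theorem stmt4_general (P Q : MvPolynomial (Fin 2) ℝ) (hQ : Q ≠ 0)
    (hcop : ∀ R : MvPolynomial (Fin 2) ℝ, R ∣ P → R ∣ Q → R.totalDegree = 0) :
    (zeroSet P ∩ zeroSet Q).ncard ≤ P.totalDegree * Q.totalDegree :=
  Set.ncard_le_of_forall_finset_card_le fun _ hS =>
    card_le_totalDegree_mul_totalDegree (isRelPrime_of_forall_dvd_totalDegree_eq_zero hQ hcop) hQ
      fun _ hs => hS hs

theorem stmt4 (P Q : MvPolynomial (Fin 2) ℝ) (hP : P ≠ 0) (hQ : Q ≠ 0)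
    (hcop : ∀ R : MvPolynomial (Fin 2) ℝ, R ∣ P → R ∣ Q → R.totalDegree = 0) :
    (zeroSet P ∩ zeroSet Q).ncard ≤ P.totalDegree * Q.totalDegree :=
  stmt4_general P Q hQ hcop
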